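/- For a finite-state MDP with fixed policy π and constant c ∈ [0,1), the operator F(d)(s_i,s_j) = (1−c)·|R^π_{s_i} − R^π_{s_j}| + c·W₁(d)(P^π_{s_i}, P^π_{s_j}) has a unique fixed point d̃ in the space of bounded pseudometrics, and d̃ is itself a pseudometric (the π-bisimulation metric). -/

import Mathlib

open Finset

structure IsPseudometric {S : Type*} (d : S → S → ℝ) : Prop where
  nonneg : ∀ x y, 0 ≤ d x y
  refl : ∀ x, d x x = 0
  symm : ∀ x y, d x y = d y x
  triangle : ∀ x y z, d x z ≤ d x y + d y z

def IsProb {S : Type*} [Fintype S] (p : S → ℝ) : Prop :=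
  (∀ s, 0 ≤ p s) ∧ ∑ s, p s = 1

def IsCoupling {S : Type*} [Fintype S] (γ : S → S → ℝ) (p q : S → ℝ) : Prop :=
  (∀ x y, 0 ≤ γ x y) ∧ (∀ x, ∑ y, γ x y = p x) ∧ (∀ y, ∑ x, γ x y = q y)

noncomputable def W1 {S : Type*} [Fintype S] (d : S → S → ℝ) (p q : S → ℝ) : ℝ :=
  sInf { r | ∃ γ : S → S → ℝ, IsCoupling γ p q ∧ r = ∑ x, ∑ y, d x y * γ x y }

noncomputable def bisimF {S : Type*} [Fintype S] (R : S → ℝ) (P : S → S → ℝ) (c : ℝ)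
    (d : S → S → ℝ) : S → S → ℝ :=
  fun x y => (1 - c) * |R x - R y| + c * W1 d (P x) (P y)

noncomputable def bisimFA {S A : Type*} [Fintype S] [Fintype A] [Nonempty A]
    (R : S → A → ℝ) (P : S → A → S → ℝ) (c : ℝ) (d : S → S → ℝ) : S → S → ℝ :=
  fun x y => ⨆ a : A, ((1 - c) * |R x a - R y a| + c * W1 d (P x a) (P y a))

/-!
The Kantorovich distance `W1 d` of a pseudometric `d` is again a pseudometric on distributions;
its triangle inequality comes from gluing a coupling of `(p, q)` with one of `(q, r)` along the
common marginal `q`. Since `W1 d` is `1`-Lipschitz in `d` for the sup distance, `bisimF` is a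
`c`-contraction of the complete space `S → S → ℝ`, and its fixed point is the limit of the
iterates of `bisimF` from `0`. These are pseudometrics, and pseudometrics form a closed set.
-/

section Wasserstein

variable {S : Type*} [Fintype S]

def transportCost (d γ : S → S → ℝ) : ℝ := ∑ x, ∑ y, d x y * γ x y

theorem IsCoupling.sum_sum_eq_one {γ : S → S → ℝ} {p q : S → ℝ} (hγ : IsCoupling γ p q)
    (hp : ∑ x, p x = 1) : ∑ x, ∑ y, γ x y = 1 := by
  simp only [hγ.2.1, hp]

theorem IsCoupling.transpose {γ : S → S → ℝ} {p q : S → ℝ} (hγ : IsCoupling γ p q) :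
    IsCoupling (fun x y => γ y x) q p :=
  ⟨fun x y => hγ.1 y x, hγ.2.2, hγ.2.1⟩

theorem isCoupling_mul {p q : S → ℝ} (hp : IsProb p) (hq : IsProb q) :
    IsCoupling (fun x y => p x * q y) p q := by
  refine ⟨fun x y => mul_nonneg (hp.1 x) (hq.1 y), fun x => ?_, fun y => ?_⟩
  · rw [← mul_sum, hq.2, mul_one]
  · rw [← sum_mul, hp.2, one_mul]

theorem isCoupling_diag [DecidableEq S] {p : S → ℝ} (hp : IsProb p) :
    IsCoupling (fun x y => if x = y then p x else 0) p p :=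
  ⟨fun x _ => ite_nonneg (hp.1 x) le_rfl, fun x => by simp, fun y => by simp⟩

theorem transportCost_le_add {d d' γ : S → S → ℝ} {p q : S → ℝ} {D : ℝ}
    (hγ : IsCoupling γ p q) (hp : ∑ x, p x = 1) (h : ∀ x y, d x y ≤ d' x y + D) :
    transportCost d γ ≤ transportCost d' γ + D :=
  calc transportCost d γ ≤ ∑ x, ∑ y, (d' x y + D) * γ x y :=
        sum_le_sum fun x _ => sum_le_sum fun y _ => mul_le_mul_of_nonneg_right (h x y) (hγ.1 x y)
    _ = transportCost d' γ + D * ∑ x, ∑ y, γ x y := by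
        simp only [transportCost, add_mul, sum_add_distrib, mul_sum]
    _ = transportCost d' γ + D := by rw [hγ.sum_sum_eq_one hp, mul_one]

theorem W1_le_transportCost {d γ : S → S → ℝ} {p q : S → ℝ} (hγ : IsCoupling γ p q)
    (hp : ∑ x, p x = 1) : W1 d p q ≤ transportCost d γ := by
  refine csInf_le ⟨-‖d‖, ?_⟩ ⟨γ, hγ, rfl⟩
  rintro _ ⟨γ', hγ', rfl⟩
  have hd : ∀ x y, (0 : ℝ) ≤ d x y + ‖d‖ := fun x y => by
    have := (norm_le_pi_norm (d x) y).trans (norm_le_pi_norm d x)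
    rw [Real.norm_eq_abs] at this
    linarith [neg_abs_le (d x y)]
  have := transportCost_le_add (d := fun _ _ => 0) hγ' hp hd
  simp only [transportCost, zero_mul, sum_const_zero] at this
  linarith

theorem le_W1 {d : S → S → ℝ} {p q : S → ℝ} {a : ℝ} (hp : IsProb p) (hq : IsProb q)
    (h : ∀ γ, IsCoupling γ p q → a ≤ transportCost d γ) : a ≤ W1 d p q :=
  le_csInf ⟨_, _, isCoupling_mul hp hq, rfl⟩ fun _ ⟨γ, hγ, hr⟩ => hr ▸ h γ hγ

theorem W1_le_add {d d' : S → S → ℝ} {p q : S → ℝ} {D : ℝ} (hp : IsProb p) (hq : IsProb q)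
    (h : ∀ x y, d x y ≤ d' x y + D) : W1 d p q ≤ W1 d' p q + D := by
  have : W1 d p q - D ≤ W1 d' p q := le_W1 hp hq fun γ hγ => by
    linarith [W1_le_transportCost (d := d) hγ hp.2, transportCost_le_add hγ hp.2 h]
  linarith

theorem apply_apply_le_add_dist (d d' : S → S → ℝ) (x y : S) : d x y ≤ d' x y + dist d d' := by
  have := (dist_le_pi_dist (d x) (d' x) y).trans (dist_le_pi_dist d d' x)
  rw [Real.dist_eq] at this
  linarith [le_abs_self (d x y - d' x y)]

theorem abs_W1_sub_W1_le_dist (d d' : S → S → ℝ) {p q : S → ℝ} (hp : IsProb p)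
    (hq : IsProb q) : |W1 d p q - W1 d' p q| ≤ dist d d' := by
  have h₁ := W1_le_add hp hq (apply_apply_le_add_dist d d')
  have h₂ := W1_le_add hp hq (apply_apply_le_add_dist d' d)
  rw [dist_comm] at h₂
  exact abs_sub_le_iff.2 ⟨by linarith, by linarith⟩

theorem W1_nonneg {d : S → S → ℝ} (hd : ∀ x y, 0 ≤ d x y) {p q : S → ℝ} (hp : IsProb p)
    (hq : IsProb q) : 0 ≤ W1 d p q :=
  le_W1 hp hq fun _ hγ => sum_nonneg fun x _ => sum_nonneg fun y _ => mul_nonneg (hd x y) (hγ.1 x y)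

theorem W1_self {d : S → S → ℝ} (hd : IsPseudometric d) {p : S → ℝ} (hp : IsProb p) :
    W1 d p p = 0 := by
  classical
  refine le_antisymm ?_ (W1_nonneg hd.nonneg hp hp)
  refine (W1_le_transportCost (isCoupling_diag hp) hp.2).trans_eq ?_
  simp [transportCost, mul_ite, hd.refl]

theorem W1_comm {d : S → S → ℝ} (hd : ∀ x y, d x y = d y x) (p q : S → ℝ) :
    W1 d p q = W1 d q p := by
  have key : ∀ p q : S → ℝ, {r | ∃ γ, IsCoupling γ p q ∧ r = transportCost d γ} ⊆
      {r | ∃ γ, IsCoupling γ q p ∧ r = transportCost d γ} := by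
    rintro p q _ ⟨γ, hγ, rfl⟩
    refine ⟨_, hγ.transpose, ?_⟩
    rw [transportCost, transportCost, sum_comm]
    simp only [hd]
  exact congrArg sInf ((key p q).antisymm (key q p))

theorem IsCoupling.eq_zero_of_snd {γ : S → S → ℝ} {p q : S → ℝ} (hγ : IsCoupling γ p q) {y : S}
    (hy : q y = 0) (x : S) : γ x y = 0 :=
  (sum_eq_zero_iff_of_nonneg fun i _ => hγ.1 i y).1 (by rw [hγ.2.2 y, hy]) x (mem_univ x)

theorem IsCoupling.eq_zero_of_fst {γ : S → S → ℝ} {p q : S → ℝ} (hγ : IsCoupling γ p q) {x : S}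
    (hx : p x = 0) (y : S) : γ x y = 0 :=
  hγ.transpose.eq_zero_of_snd hx y

/-- `γ₁ x y * γ₂ y z / q y` is the law of a triple `(x, y, z)` with `(x, y) ∼ γ₁` and
`(y, z) ∼ γ₂`; where `q y = 0` both couplings vanish, so the junk value of `/ 0` is harmless. -/
noncomputable def glue (γ₁ γ₂ : S → S → ℝ) (q : S → ℝ) : S → S → ℝ :=
  fun x z => ∑ y, γ₁ x y * γ₂ y z / q y

section Gluing

variable {γ₁ γ₂ : S → S → ℝ} {p q r : S → ℝ}

theorem mul_div_marginal_nonneg (h₁ : IsCoupling γ₁ p q) (h₂ : IsCoupling γ₂ q r) (x y z : S) :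
    0 ≤ γ₁ x y * γ₂ y z / q y :=
  div_nonneg (mul_nonneg (h₁.1 x y) (h₂.1 y z)) (h₁.2.2 y ▸ sum_nonneg fun i _ => h₁.1 i y)

theorem sum_mul_div_marginal_right (h₁ : IsCoupling γ₁ p q) (h₂ : IsCoupling γ₂ q r) (x y : S) :
    ∑ z, γ₁ x y * γ₂ y z / q y = γ₁ x y := by
  rw [← sum_div, ← mul_sum, h₂.2.1 y]
  by_cases hy : q y = 0
  · rw [hy, h₁.eq_zero_of_snd hy x, zero_mul, zero_div]
  · exact mul_div_cancel_right₀ _ hy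

theorem sum_mul_div_marginal_left (h₁ : IsCoupling γ₁ p q) (h₂ : IsCoupling γ₂ q r) (y z : S) :
    ∑ x, γ₁ x y * γ₂ y z / q y = γ₂ y z := by
  rw [← sum_div, ← sum_mul, h₁.2.2 y]
  by_cases hy : q y = 0
  · rw [hy, h₂.eq_zero_of_fst hy z, mul_zero, zero_div]
  · exact mul_div_cancel_left₀ _ hy

theorem IsCoupling.glue (h₁ : IsCoupling γ₁ p q) (h₂ : IsCoupling γ₂ q r) :
    IsCoupling (glue γ₁ γ₂ q) p r := by
  refine ⟨fun x z => sum_nonneg fun y _ => mul_div_marginal_nonneg h₁ h₂ x y z, fun x => ?_,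
    fun z => ?_⟩
  · simp only [_root_.glue]
    rw [sum_comm]
    simp only [sum_mul_div_marginal_right h₁ h₂, h₁.2.1]
  · simp only [_root_.glue]
    rw [sum_comm]
    simp only [sum_mul_div_marginal_left h₁ h₂, h₂.2.2]

theorem transportCost_glue_le {d : S → S → ℝ} (hd : ∀ x y z, d x z ≤ d x y + d y z)
    (h₁ : IsCoupling γ₁ p q) (h₂ : IsCoupling γ₂ q r) :
    transportCost d (glue γ₁ γ₂ q) ≤ transportCost d γ₁ + transportCost d γ₂ := by
  set g : S → S → S → ℝ := fun x y z => γ₁ x y * γ₂ y z / q y with hg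
  calc transportCost d (glue γ₁ γ₂ q) = ∑ x, ∑ z, ∑ y, d x z * g x y z := by
        simp only [transportCost, _root_.glue, mul_sum, hg]
    _ ≤ ∑ x, ∑ z, ∑ y, (d x y * g x y z + d y z * g x y z) := by
        gcongr with x _ z _ y _
        rw [← add_mul]
        exact mul_le_mul_of_nonneg_right (hd x y z) (mul_div_marginal_nonneg h₁ h₂ x y z)
    _ = ∑ x, ∑ y, ∑ z, d x y * g x y z + ∑ y, ∑ z, ∑ x, d y z * g x y z := by
        simp only [sum_add_distrib]
        congr 1
        · exact sum_congr rfl fun x _ => sum_comm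
        · rw [sum_comm]
          exact (sum_congr rfl fun z _ => sum_comm).trans sum_comm
    _ = transportCost d γ₁ + transportCost d γ₂ := by
        simp only [← mul_sum, hg, sum_mul_div_marginal_right h₁ h₂,
          sum_mul_div_marginal_left h₁ h₂, transportCost]

end Gluing

theorem W1_triangle {d : S → S → ℝ} (hd : IsPseudometric d) {p q r : S → ℝ}
    (hp : IsProb p) (hq : IsProb q) (hr : IsProb r) :
    W1 d p r ≤ W1 d p q + W1 d q r := by
  have : W1 d p r - W1 d q r ≤ W1 d p q := le_W1 hp hq fun γ₁ h₁ => by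
    have : W1 d p r - transportCost d γ₁ ≤ W1 d q r := le_W1 hq hr fun γ₂ h₂ => by
      linarith [W1_le_transportCost (d := d) (h₁.glue h₂) hp.2,
        transportCost_glue_le hd.triangle h₁ h₂]
    linarith
  linarith

end Wasserstein

theorem isPseudometric_zero {S : Type*} : IsPseudometric (0 : S → S → ℝ) :=
  ⟨fun _ _ => le_rfl, fun _ => rfl, fun _ _ => rfl, fun _ _ _ => by simp⟩

theorem isClosed_setOf_isPseudometric {S : Type*} :
    IsClosed {d : S → S → ℝ | IsPseudometric d} := by
  have h : {d : S → S → ℝ | IsPseudometric d} =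
      ({d | ∀ x y, 0 ≤ d x y} ∩ {d | ∀ x, d x x = 0}) ∩
        ({d | ∀ x y, d x y = d y x} ∩ {d | ∀ x y z, d x z ≤ d x y + d y z}) := by
    ext d
    exact ⟨fun ⟨h₁, h₂, h₃, h₄⟩ => ⟨⟨h₁, h₂⟩, h₃, h₄⟩, fun ⟨⟨h₁, h₂⟩, h₃, h₄⟩ => ⟨h₁, h₂, h₃, h₄⟩⟩
  rw [h]
  simp only [Set.ofPred_forall]
  refine ((isClosed_iInter fun x => isClosed_iInter fun y => ?_).inter
    (isClosed_iInter fun x => ?_)).inter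
    ((isClosed_iInter fun x => isClosed_iInter fun y => ?_).inter
      (isClosed_iInter fun x => isClosed_iInter fun y => isClosed_iInter fun z => ?_))
  · exact isClosed_le continuous_const (by fun_prop)
  · exact isClosed_eq (by fun_prop) continuous_const
  · exact isClosed_eq (by fun_prop) (by fun_prop)
  · exact isClosed_le (by fun_prop) (by fun_prop)

section Bisimulation

variable {S : Type*} [Fintype S] {R : S → ℝ} {P : S → S → ℝ} {c : ℝ}

theorem isPseudometric_bisimF (hP : ∀ s, IsProb (P s)) (hc0 : 0 ≤ c) (hc1 : c ≤ 1)
    {d : S → S → ℝ} (hd : IsPseudometric d) : IsPseudometric (bisimF R P c d) where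
  nonneg x y := add_nonneg (mul_nonneg (by linarith) (abs_nonneg _))
    (mul_nonneg hc0 (W1_nonneg hd.nonneg (hP x) (hP y)))
  refl x := by simp [bisimF, W1_self hd (hP x)]
  symm x y := by simp only [bisimF, abs_sub_comm (R x), W1_comm hd.symm (P x)]
  triangle x y z := by
    have hR := mul_le_mul_of_nonneg_left (abs_sub_le (R x) (R y) (R z)) (sub_nonneg.2 hc1)
    have hW := mul_le_mul_of_nonneg_left (W1_triangle hd (hP x) (hP y) (hP z)) hc0
    simp only [bisimF]
    linarith

theorem lipschitzWith_bisimF (hP : ∀ s, IsProb (P s)) (hc0 : 0 ≤ c) :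
    LipschitzWith ⟨c, hc0⟩ (bisimF R P c) := by
  refine LipschitzWith.of_dist_le_mul fun d d' => ?_
  have hD : 0 ≤ c * dist d d' := mul_nonneg hc0 dist_nonneg
  refine (dist_pi_le_iff hD).2 fun x => (dist_pi_le_iff hD).2 fun y => ?_
  have : bisimF R P c d x y - bisimF R P c d' x y = c * (W1 d (P x) (P y) - W1 d' (P x) (P y)) := by
    simp only [bisimF]
    ring
  rw [Real.dist_eq, this, abs_mul, abs_of_nonneg hc0]
  exact mul_le_mul_of_nonneg_left (abs_W1_sub_W1_le_dist d d' (hP x) (hP y)) hc0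

end Bisimulation

/-- the on-policy bisimulation operator has a unique fixed point among
(bounded, automatic by finiteness) pseudometrics, which is itself a pseudometric. -/
theorem stmt_3 {S : Type*} [Fintype S]
    (R : S → ℝ) (P : S → S → ℝ) (hP : ∀ s, IsProb (P s))
    (c : ℝ) (hc0 : 0 ≤ c) (hc1 : c < 1) :
    ∃ dt : S → S → ℝ, IsPseudometric dt ∧ bisimF R P c dt = dt ∧
      ∀ d : S → S → ℝ, IsPseudometric d → bisimF R P c d = d → d = dt := by
  have hF : ContractingWith ⟨c, hc0⟩ (bisimF R P c) := ⟨hc1, lipschitzWith_bisimF hP hc0⟩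
  refine ⟨hF.fixedPoint, ?_, hF.fixedPoint_isFixedPt, fun d _ hd => hF.fixedPoint_unique hd⟩
  have hmaps : Set.MapsTo (bisimF R P c) {d | IsPseudometric d} {d | IsPseudometric d} :=
    fun _ => isPseudometric_bisimF hP hc0 hc1.le
  exact isClosed_setOf_isPseudometric.mem_of_tendsto (hF.tendsto_iterate_fixedPoint 0)
    (Filter.Eventually.of_forall fun n => hmaps.iterate n isPseudometric_zero)
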